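/- Let F be a treemap, let σ, τ be strings with σ a prefix of τ, and let G be the treemap defined by G(γ) = F(τ⌢γ′) if γ = σ⌢γ′ for some string γ′, and G(γ) = F(γ) otherwise. If f : ℕ → ℕ is a path through G(T) (every finite initial segment of f belongs to G(T) = {μ | ∃ ρ, μ ⊆ G(ρ)}) and F(σ) is an initial segment of f, then G(σ) = F(τ) is an initial segment of f. -/
import Mathlib


/-- A treemap is `F : ℕ^{<ℕ} → ℕ^{<ℕ}` (strings as lists of naturals) with
`F(σ)⌢i ⊆ F(σ⌢i)` for all strings `σ` and all `i : ℕ`. -/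
def Treemap (F : List ℕ → List ℕ) : Prop :=
  ∀ (σ : List ℕ) (i : ℕ), (F σ ++ [i]) <+: F (σ ++ [i])

/-- The tree `F(T) = {τ | ∃ σ, τ ⊆ F(σ)}` determined by a treemap `F`. -/
def treeOf (F : List ℕ → List ℕ) : Set (List ℕ) :=
  {τ | ∃ σ : List ℕ, τ <+: F σ}

/-- The initial segment `f↾n = (f 0, …, f (n-1))` of `f : ℕ → ℕ`. -/
def restrict (f : ℕ → ℕ) (n : ℕ) : List ℕ :=
  (List.range n).map f

/-- `σ` is an initial segment of `f : ℕ → ℕ`. -/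
def IsInitSeg (σ : List ℕ) (f : ℕ → ℕ) : Prop :=
  σ = restrict f σ.length

/-- The set of paths through the tree `F(T)` of a treemap `F`. -/
def pathSet (F : List ℕ → List ℕ) : Set (ℕ → ℕ) :=
  {f | ∀ n : ℕ, restrict f n ∈ treeOf F}

lemma treemap_mono {F : List ℕ → List ℕ} (hF : Treemap F) :
    ∀ (γ σ : List ℕ), F σ <+: F (σ ++ γ) := by
  intro γ
  induction γ with
  | nil => intro σ; simp
  | cons i γ ih =>
    intro σ
    have h1 : F σ <+: F (σ ++ [i]) := ((F σ).prefix_append [i]).trans (hF σ i)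
    have h2 := ih (σ ++ [i])
    simpa using h1.trans h2

lemma restrict_mono (f : ℕ → ℕ) {m n : ℕ} (h : m ≤ n) :
    restrict f m <+: restrict f n := by
  obtain ⟨k, rfl⟩ := Nat.exists_eq_add_of_le h
  unfold restrict
  rw [List.range_add, List.map_append]
  exact (restrict f m).prefix_append _

lemma restrict_length (f : ℕ → ℕ) (n : ℕ) : (restrict f n).length = n := by
  simp [restrict]

lemma list_tri (σ ρ : List ℕ) :
    σ <+: ρ ∨ ρ <+: σ ∨
      ∃ δ a b σ' ρ', a ≠ b ∧ σ = δ ++ a :: σ' ∧ ρ = δ ++ b :: ρ' := by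
  induction σ generalizing ρ with
  | nil => exact Or.inl (List.nil_prefix)
  | cons a σ' ih =>
    cases ρ with
    | nil => exact Or.inr (Or.inl List.nil_prefix)
    | cons b ρ' =>
      by_cases hab : a = b
      · subst hab
        rcases ih ρ' with h | h | ⟨δ, x, y, s, r, hxy, hs, hr⟩
        · exact Or.inl (List.cons_prefix_cons.mpr ⟨rfl, h⟩)
        · exact Or.inr (Or.inl (List.cons_prefix_cons.mpr ⟨rfl, h⟩))
        · exact Or.inr (Or.inr ⟨a :: δ, x, y, s, r, hxy, by simp [hs], by simp [hr]⟩)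
      · exact Or.inr (Or.inr ⟨[], a, b, σ', ρ', hab, rfl, rfl⟩)

lemma treemap_comparable {F : List ℕ → List ℕ} (hF : Treemap F)
    {σ ρ : List ℕ} (h : F σ <+: F ρ) : σ <+: ρ ∨ ρ <+: σ := by
  rcases list_tri σ ρ with h1 | h1 | ⟨δ, a, b, σ', ρ', hab, rfl, rfl⟩
  · exact Or.inl h1
  · exact Or.inr h1
  · exfalso
    have ha : F δ ++ [a] <+: F (δ ++ b :: ρ') := by
      have : F δ ++ [a] <+: F (δ ++ [a] ++ σ') := (hF δ a).trans (treemap_mono hF σ' _)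
      exact (this.trans (by simpa using h))
    have hb : F δ ++ [b] <+: F (δ ++ b :: ρ') := by
      have : F δ ++ [b] <+: F (δ ++ [b] ++ ρ') := (hF δ b).trans (treemap_mono hF ρ' _)
      simpa using this
    have heq : F δ ++ [a] = F δ ++ [b] := by
      rcases List.prefix_or_prefix_of_prefix ha hb with h' | h'
      · exact h'.eq_of_length (by simp)
      · exact (h'.eq_of_length (by simp)).symm
    exact hab (by simpa using heq)

/-- With `G` the treemap obtained from `F` by sending `σ⌢γ'` to `F(τ⌢γ')` (for `σ ⊆ τ`):
if `f` is a path through `G(T)` extending `F σ`, then `f` extends `G σ = F τ`. -/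
theorem path_extends_advanced_image (F G : List ℕ → List ℕ) (hF : Treemap F)
    (σ τ : List ℕ) (hστ : σ <+: τ)
    (hG₁ : ∀ γ' : List ℕ, G (σ ++ γ') = F (τ ++ γ'))
    (hG₂ : ∀ γ : List ℕ, ¬ σ <+: γ → G γ = F γ)
    (f : ℕ → ℕ) (hf : f ∈ pathSet G)
    (hfσ : IsInitSeg (F σ) f) :
    G σ = F τ ∧ IsInitSeg (F τ) f := by
  have hGσ : G σ = F τ := by simpa using hG₁ []
  set n := (F τ).length with hn
  obtain ⟨ρ, hρ⟩ := hf n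
  obtain ⟨t, rfl⟩ := hστ
  have hFστ : F σ <+: F (σ ++ t) := treemap_mono hF t σ
  have hlenσ : (F σ).length ≤ n := by
    have := hFστ.length_le; omega
  have hFσf : F σ <+: restrict f n := by
    rw [hfσ]; exact restrict_mono f hlenσ
  have hrn : (restrict f n).length = n := restrict_length f n
  have key : restrict f n = F (σ ++ t) := by
    by_cases hσρ : σ <+: ρ
    · obtain ⟨ρ', rfl⟩ := hσρ
      rw [hG₁ ρ'] at hρ
      have hτ : F (σ ++ t) <+: F (σ ++ t ++ ρ') := treemap_mono hF ρ' _
      rcases List.prefix_or_prefix_of_prefix hρ hτ with h | h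
      · exact h.eq_of_length (by rw [hrn])
      · exact (h.eq_of_length (by rw [hrn, hn])).symm
    · rw [hG₂ ρ hσρ] at hρ
      rcases treemap_comparable hF (hFσf.trans hρ) with h | h
      · exact absurd h hσρ
      · obtain ⟨s, rfl⟩ := h
        have hFρσ : F ρ <+: F (ρ ++ s) := treemap_mono hF s ρ
        have l1 : n ≤ (F ρ).length := by
          have := hρ.length_le; omega
        have l2 : (F ρ).length ≤ (F (ρ ++ s)).length := hFρσ.length_le
        have e1 : restrict f n = F ρ := hρ.eq_of_length (by omega)
        have e2 : F ρ = F (ρ ++ s) := hFρσ.eq_of_length (by omega)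
        have e3 : F (ρ ++ s) = F (ρ ++ s ++ t) := hFστ.eq_of_length (by omega)
        rw [e1, e2, e3]
  refine ⟨hGσ, ?_⟩
  show F (σ ++ t) = restrict f (F (σ ++ t)).length
  rw [← hn, key]
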